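/- arXiv:1607.03688 — 9 statements merged into one kernel-verified Lean document; each statement's English description precedes it below -/
import Mathlib

section
/- Consider the algorithm A^(2)_{L,c} on two machines with true execution times t₁, t₂ ≥ 0. At any pure Nash equilibrium (t̂₁, t̂₂) with t̂₁ ≤ t̂₂, the ratio of the two declarations is at least c, i.e. t̂₂ ≥ c·t̂₁. -/
/-- Allocation probability of machine 1 in the algorithm `A^(2)_{L,c}`,
given declared execution times `x1`, `x2`. -/
noncomputable def alloc1 (L c x1 x2 : ℝ) : ℝ :=
  if x1 = x2 then 1 / 2
  else if x1 < x2 then (if x2 < c * x1 then 1 / L else 1 - x1 / (L * x2))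
  else 1 - (if x1 < c * x2 then 1 / L else 1 - x2 / (L * x1))

/-- Allocation probability of machine 2 (by symmetry of the algorithm). -/
noncomputable def alloc2 (L c x1 x2 : ℝ) : ℝ := alloc1 L c x2 x1

/-- Expected cost of machine 1 with true time `t1` at declarations `(x1, x2)`,
when machines are bound by their declarations. -/
noncomputable def cost1 (L c t1 x1 x2 : ℝ) : ℝ := alloc1 L c x1 x2 * max x1 t1

/-- Expected cost of machine 2 with true time `t2` at declarations `(x1, x2)`. -/
noncomputable def cost2 (L c t2 x1 x2 : ℝ) : ℝ := alloc2 L c x1 x2 * max x2 t2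

/-- `(b1, b2)` is a pure Nash equilibrium of `A^(2)_{L,c}` for true times `(t1, t2)`:
no machine can strictly decrease her expected cost by a unilateral deviation to
any nonnegative declaration. -/
def IsEquilibrium2 (L c t1 t2 b1 b2 : ℝ) : Prop :=
  (∀ x : ℝ, 0 ≤ x → cost1 L c t1 b1 b2 ≤ cost1 L c t1 x b2) ∧
  (∀ x : ℝ, 0 ≤ x → cost2 L c t2 b1 b2 ≤ cost2 L c t2 b1 x)

/-- At any pure Nash equilibrium `(b1, b2)` of `A^(2)_{L,c}` with `b1 ≤ b2`,
the ratio of the two declarations is at least `c`, i.e. `b2 ≥ c * b1`. -/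
theorem claim_ratio_at_least_c
    (L c t1 t2 b1 b2 : ℝ)
    (hL : 2 < L) (hc : 1 < c)
    (ht1 : 0 ≤ t1) (ht2 : 0 ≤ t2)
    (hb1 : 0 ≤ b1) (hb2 : 0 ≤ b2)
    (hord : b1 ≤ b2)
    (heq : IsEquilibrium2 L c t1 t2 b1 b2) :
    c * b1 ≤ b2 := by
  by_contra hcon
  push_neg at hcon
  have hb1pos : 0 < b1 := by nlinarith
  have hLpos : (0 : ℝ) < L := by linarith
  set x : ℝ := max t2 (c * b1) + 1 with hxdef
  have hxc : c * b1 < x := lt_of_le_of_lt (le_max_right _ _) (lt_add_one _)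
  have hxt : t2 ≤ x := le_of_lt (lt_of_le_of_lt (le_max_left _ _) (lt_add_one _))
  have hb1x : b1 < x := by nlinarith
  have hxpos : 0 < x := lt_trans hb1pos hb1x
  have hdev : cost2 L c t2 b1 x = b1 / L := by
    unfold cost2 alloc2 alloc1
    rw [if_neg (ne_of_gt hb1x), if_neg (not_lt.mpr (le_of_lt hb1x)),
      if_neg (not_lt.mpr (le_of_lt hxc)), max_eq_left hxt]
    field_simp
    ring
  have hkey := heq.2 x (le_of_lt hxpos)
  rw [hdev] at hkey
  rcases eq_or_lt_of_le hord with h | h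
  · have hcur : cost2 L c t2 b1 b2 = 1 / 2 * max b2 t2 := by
      unfold cost2 alloc2 alloc1
      rw [if_pos h.symm]
    rw [hcur] at hkey
    have h1 : b1 / L < 1 / 2 * b1 := by
      rw [div_lt_iff₀ hLpos]; nlinarith
    have h2 : (1:ℝ) / 2 * b1 ≤ 1 / 2 * max b2 t2 := by
      nlinarith [le_max_left b2 t2, h.le]
    linarith
  · have hcur : cost2 L c t2 b1 b2 = (1 - 1 / L) * max b2 t2 := by
      unfold cost2 alloc2 alloc1
      rw [if_neg (ne_of_gt h), if_neg (not_lt.mpr (le_of_lt h)), if_pos hcon]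
    rw [hcur] at hkey
    have h1 : b1 / L < (1 - 1 / L) * b1 := by
      rw [div_lt_iff₀ hLpos]
      have he : (1 - 1 / L) * b1 * L = (L - 1) * b1 := by field_simp
      rw [he]; nlinarith
    have h2 : (1 - 1 / L) * b1 ≤ (1 - 1 / L) * max b2 t2 := by
      have h3 : (0:ℝ) ≤ 1 - 1 / L := by
        have : 1 / L < 1 := by rw [div_lt_one hLpos]; linarith
        linarith
      have h4 : b1 ≤ max b2 t2 := le_trans hord (le_max_left _ _)
      nlinarith
    linarith
end

section
/- Consider the algorithm A^(2)_{L,c} on two machines with true execution times t₁, t₂ ≥ 0. At any pure Nash equilibrium (t̂₁, t̂₂) with t̂₁ ≤ t̂₂, the smaller declaration satisfies t̂₁ = min(t₁, t̂₂/c) (where t₁ is the true execution time of the machine declaring t̂₁). -/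
/-!
Let `0 < b₂` (otherwise both declarations vanish). Machine 1 can always secure cost `b₂ / L` by
declaring at least `max (c b₂) t₁`, and machine 2 likewise cost `b₁ / L`. The first rules out
`b₁ = b₂`, where machine 1 pays at least `b₂ / 2`; the second rules out `b₂ / c < b₁ < b₂`, where
machine 2 pays at least `(1 - 1/L) b₂`. So `c b₁ ≤ b₂`, and on declarations `x ≤ b₂ / c` machine 1
pays `(1 - x / (L b₂)) · max x t₁`, which decreases up to `t₁` and increases after it as long as
`2x < L b₂`; its only minimiser on `[0, b₂ / c]` is `min t₁ (b₂ / c)`.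
-/

open Set

noncomputable def farCost (K t x : ℝ) : ℝ := (1 - x / K) * max x t

theorem eq_min_of_isMinOn_farCost {K t B b : ℝ} (hK : 2 * B < K) (ht : 0 ≤ t)
    (hb : b ∈ Icc 0 B) (hmin : IsMinOn (farCost K t) (Icc 0 B) b) : b = min t B := by
  obtain ⟨hb0, hbB⟩ := hb
  have hK0 : 0 < K := by linarith
  rcases lt_trichotomy b (min t B) with hlt | heq | hgt
  · have hbt : b < t := hlt.trans_le (min_le_left t B)
    have hm : min t B ∈ Icc 0 B := ⟨le_min ht (hb0.trans hbB), min_le_right t B⟩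
    have hdecr : farCost K t (min t B) < farCost K t b := by
      rw [farCost, farCost, max_eq_right (min_le_left t B), max_eq_right hbt.le]
      refine mul_lt_mul_of_pos_right ?_ (hb0.trans_lt hbt)
      linarith [div_lt_div_of_pos_right hlt hK0]
    exact absurd (hmin hm) hdecr.not_ge
  · exact heq
  · have htb : t < b := by
      rcases min_choice t B with h | h <;> rw [h] at hgt
      · exact hgt
      · exact absurd hbB hgt.not_ge
    have hincr : farCost K t t < farCost K t b := by
      rw [farCost, farCost, max_self, max_eq_left htb.le, ← sub_pos]
      have hsum : 0 < 1 - (b + t) / K := by rw [sub_pos, div_lt_one hK0]; linarith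
      calc 0 < (b - t) * (1 - (b + t) / K) := mul_pos (sub_pos.2 htb) hsum
        _ = (1 - b / K) * b - (1 - t / K) * t := by ring
    exact absurd (hmin ⟨ht, htb.le.trans hbB⟩) hincr.not_ge

section Allocation

variable {L c : ℝ}

theorem alloc1_self (x : ℝ) : alloc1 L c x x = 1 / 2 := by
  simp [alloc1]

theorem alloc1_of_far_below {x₁ x₂ : ℝ} (h : x₁ < x₂) (hfar : c * x₁ ≤ x₂) :
    alloc1 L c x₁ x₂ = 1 - x₁ / (L * x₂) := by
  rw [alloc1, if_neg h.ne, if_pos h, if_neg hfar.not_gt]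

theorem alloc1_of_near_above {x₁ x₂ : ℝ} (h : x₂ < x₁) (hnear : x₁ < c * x₂) :
    alloc1 L c x₁ x₂ = 1 - 1 / L := by
  rw [alloc1, if_neg h.ne', if_neg h.not_gt, if_pos hnear]

theorem alloc1_of_far_above {x₁ x₂ : ℝ} (h : x₂ < x₁) (hfar : c * x₂ ≤ x₁) :
    alloc1 L c x₁ x₂ = x₂ / (L * x₁) := by
  rw [alloc1, if_neg h.ne', if_neg h.not_gt, if_neg hfar.not_gt]
  ring

theorem cost2_eq_cost1 (t₂ x₁ x₂ : ℝ) : cost2 L c t₂ x₁ x₂ = cost1 L c t₂ x₂ x₁ := rfl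

theorem cost1_of_far_below {t₁ x b₂ : ℝ} (hx : x < b₂) (hfar : c * x ≤ b₂) :
    cost1 L c t₁ x b₂ = farCost (L * b₂) t₁ x := by
  rw [cost1, alloc1_of_far_below hx hfar, farCost]

theorem cost1_of_far_above {t₁ x b₂ : ℝ} (hc : 1 < c) (hb₂ : 0 < b₂) (hfar : c * b₂ ≤ x)
    (ht₁ : t₁ ≤ x) : cost1 L c t₁ x b₂ = b₂ / L := by
  have hx : b₂ < x := (lt_mul_of_one_lt_left hb₂ hc).trans_le hfar
  rw [cost1, alloc1_of_far_above hx hfar, max_eq_left ht₁, ← div_div,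
    div_mul_cancel₀ _ (hb₂.trans hx).ne']

theorem div_lt_cost1_self (hL : 2 < L) {t b : ℝ} (hb : 0 < b) : b / L < cost1 L c t b b := by
  rw [cost1, alloc1_self]
  have : b / L < b / 2 := div_lt_div_of_pos_left hb two_pos hL
  linarith [le_max_left b t]

theorem div_lt_cost2_of_near_above (hL : 2 < L) {t₂ b₁ b₂ : ℝ} (hb₁ : 0 ≤ b₁) (h : b₁ < b₂)
    (hnear : b₂ < c * b₁) : b₁ / L < cost2 L c t₂ b₁ b₂ := by
  rw [cost2_eq_cost1, cost1, alloc1_of_near_above h hnear]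
  have hL0 : 0 < L := by linarith
  have h1 : b₁ / L < b₂ / L := div_lt_div_of_pos_right h hL0
  have h2 : b₂ / L < (1 - 1 / L) * b₂ := by
    rw [sub_mul, one_div_mul_eq_div, lt_sub_iff_add_lt, ← add_div, div_lt_iff₀ hL0]
    nlinarith
  have h3 : (1 - 1 / L) * b₂ ≤ (1 - 1 / L) * max b₂ t₂ :=
    mul_le_mul_of_nonneg_left (le_max_left b₂ t₂) (by rw [sub_nonneg, div_le_one hL0]; linarith)
  linarith

end Allocation

namespace IsEquilibrium2

variable {L c t₁ t₂ b₁ b₂ : ℝ}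

theorem cost1_le (heq : IsEquilibrium2 L c t₁ t₂ b₁ b₂) (hc : 1 < c) (hb₂ : 0 < b₂) :
    cost1 L c t₁ b₁ b₂ ≤ b₂ / L := by
  have hdev := heq.1 (max (c * b₂) t₁) ((by positivity : 0 ≤ c * b₂).trans (le_max_left _ _))
  rwa [cost1_of_far_above hc hb₂ (le_max_left _ _) (le_max_right _ _)] at hdev

theorem cost2_le (heq : IsEquilibrium2 L c t₁ t₂ b₁ b₂) (hc : 1 < c) (hb₁ : 0 < b₁) :
    cost2 L c t₂ b₁ b₂ ≤ b₁ / L := by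
  have hdev := heq.2 (max (c * b₁) t₂) ((by positivity : 0 ≤ c * b₁).trans (le_max_left _ _))
  rwa [cost2_eq_cost1, cost2_eq_cost1,
    cost1_of_far_above hc hb₁ (le_max_left _ _) (le_max_right _ _)] at hdev

theorem isMinOn_farCost (heq : IsEquilibrium2 L c t₁ t₂ b₁ b₂) (hc : 1 < c) (hb₂ : 0 < b₂)
    (hb₁ : b₁ ≤ b₂ / c) : IsMinOn (farCost (L * b₂) t₁) (Icc 0 (b₂ / c)) b₁ := by
  have hc0 : 0 < c := one_pos.trans hc
  have hfar {x : ℝ} (hx : x ≤ b₂ / c) : cost1 L c t₁ x b₂ = farCost (L * b₂) t₁ x :=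
    cost1_of_far_below (hx.trans_lt (div_lt_self hb₂ hc)) ((le_div_iff₀' hc0).1 hx)
  intro x hx
  rw [mem_ofPred_eq, ← hfar hb₁, ← hfar hx.2]
  exact heq.1 x hx.1

end IsEquilibrium2

theorem claim_smallest_bid_general
    (L c t1 t2 b1 b2 : ℝ)
    (hL : 2 < L) (hc : 1 < c)
    (ht1 : 0 ≤ t1)
    (hb1 : 0 ≤ b1)
    (hord : b1 ≤ b2)
    (heq : IsEquilibrium2 L c t1 t2 b1 b2) :
    b1 = min t1 (b2 / c) := by
  have hc0 : 0 < c := one_pos.trans hc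
  rcases (hb1.trans hord).eq_or_lt with hb2 | hb2
  · obtain rfl : b1 = 0 := by linarith
    simp [← hb2, ht1]
  have hlt : b1 < b2 := hord.lt_of_ne fun h ↦
    (div_lt_cost1_self hL hb2).not_ge (h ▸ heq.cost1_le hc hb2)
  have hfar : b1 ≤ b2 / c := by
    by_contra! hnear
    exact (div_lt_cost2_of_near_above hL hb1 hlt ((div_lt_iff₀' hc0).1 hnear)).not_ge
      (heq.cost2_le hc ((div_pos hb2 hc0).trans hnear))
  refine eq_min_of_isMinOn_farCost ?_ ht1 ⟨hb1, hfar⟩ (heq.isMinOn_farCost hc hb2 hfar)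
  calc 2 * (b2 / c) < 2 * b2 := by gcongr; exact div_lt_self hb2 hc
    _ < L * b2 := by gcongr

/-- At any pure Nash equilibrium `(b1, b2)` of `A^(2)_{L,c}` with `b1 ≤ b2`,
the smaller declaration is `b1 = min t1 (b2 / c)`. -/
theorem claim_smallest_bid
    (L c t1 t2 b1 b2 : ℝ)
    (hL : 2 < L) (hc : 1 < c)
    (ht1 : 0 ≤ t1) (ht2 : 0 ≤ t2)
    (hb1 : 0 ≤ b1) (hb2 : 0 ≤ b2)
    (hord : b1 ≤ b2)
    (heq : IsEquilibrium2 L c t1 t2 b1 b2) :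
    b1 = min t1 (b2 / c) :=
  claim_smallest_bid_general L c t1 t2 b1 b2 hL hc ht1 hb1 hord heq
end

section
/- Consider the algorithm A^(2)_{L,c} on two machines with true execution times t₁, t₂ ≥ 0. At any pure Nash equilibrium (t̂₁, t̂₂) with t̂₁ ≤ t̂₂, the declarations preserve the relative order of the true execution times: t₁ ≤ t₂ (where t_i is the true execution time of the machine declaring t̂_i). -/
private lemma alloc1_low_far {L c x1 x2 : ℝ} (h : x1 < x2) (hf : c * x1 ≤ x2) :
    alloc1 L c x1 x2 = 1 - x1 / (L * x2) := by
  rw [alloc1, if_neg h.ne, if_pos h, if_neg (not_lt.mpr hf)]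

private lemma alloc1_low_close {L c x1 x2 : ℝ} (h : x1 < x2) (hf : x2 < c * x1) :
    alloc1 L c x1 x2 = 1 / L := by
  rw [alloc1, if_neg h.ne, if_pos h, if_pos hf]

private lemma alloc1_high_far {L c x1 x2 : ℝ} (h : x2 < x1) (hf : c * x2 ≤ x1) :
    alloc1 L c x1 x2 = x2 / (L * x1) := by
  rw [alloc1, if_neg h.ne', if_neg (not_lt.mpr h.le), if_neg (not_lt.mpr hf)]
  ring

private lemma alloc1_high_close {L c x1 x2 : ℝ} (h : x2 < x1) (hf : x1 < c * x2) :
    alloc1 L c x1 x2 = 1 - 1 / L := by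
  rw [alloc1, if_neg h.ne', if_neg (not_lt.mpr h.le), if_pos hf]

private lemma alloc1_diag {L c x : ℝ} : alloc1 L c x x = 1 / 2 := by
  rw [alloc1, if_pos rfl]

set_option maxHeartbeats 1000000 in
/-- At any pure Nash equilibrium `(b1, b2)` of `A^(2)_{L,c}` with `b1 ≤ b2`,
the declarations preserve the relative order of the true execution times:
`t1 ≤ t2`. -/
theorem claim_order_preserved
    (L c t1 t2 b1 b2 : ℝ)
    (hL : 2 < L) (hc : 1 < c)
    (ht1 : 0 ≤ t1) (ht2 : 0 ≤ t2)
    (hb1 : 0 ≤ b1) (hb2 : 0 ≤ b2)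
    (hord : b1 ≤ b2)
    (heq : IsEquilibrium2 L c t1 t2 b1 b2) :
    t1 ≤ t2 := by
  obtain ⟨h1, h2⟩ := heq
  have hL0 : (0:ℝ) < L := by linarith
  have hc0 : (0:ℝ) < c := by linarith
  have hw : 1 / L < 1 / 2 := by rw [div_lt_div_iff₀ hL0 two_pos]; linarith
  have hw0 : (0:ℝ) < 1 / L := by positivity
  by_contra hcon
  push_neg at hcon
  have ht1pos : 0 < t1 := lt_of_le_of_lt ht2 hcon
  rcases eq_or_lt_of_le hord with hbe | hbl
  · -- b1 = b2
    subst hbe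
    rcases eq_or_lt_of_le hb1 with hb0 | hb0
    · -- b1 = 0
      subst hb0
      have key := h1 1 (by norm_num)
      rw [cost1, cost1, alloc1_diag,
        alloc1_high_far (by norm_num) (by simpa using zero_le_one),
        max_eq_right ht1] at key
      simp at key
      linarith
    · -- 0 < b1
      set x := max (c * b1) t1 + 1 with hxdef
      have hcb : b1 < c * b1 := by nlinarith
      have hxb : b1 < x := by
        have := le_max_left (c * b1) t1; simp only [hxdef]; linarith
      have hxf : c * b1 ≤ x := by
        have := le_max_left (c * b1) t1; simp only [hxdef]; linarith
      have hxt : t1 ≤ x := by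
        have := le_max_right (c * b1) t1; simp only [hxdef]; linarith
      have hx0 : 0 < x := lt_of_le_of_lt hb0.le hxb
      have key := h1 x hx0.le
      rw [cost1, cost1, alloc1_diag, alloc1_high_far hxb hxf, max_eq_left hxt] at key
      have hxe : b1 / (L * x) * x = b1 / L := by field_simp
      rw [hxe, show b1 / L = 1 / L * b1 from by ring] at key
      have p2 := mul_lt_mul_of_pos_right hw hb0
      linarith [le_max_left b1 t1]
  · -- b1 < b2
    have hb2pos : 0 < b2 := lt_of_le_of_lt hb1 hbl
    have hLb2 : 0 < L * b2 := mul_pos hL0 hb2pos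
    have hub : b1 / (L * b2) ≤ 1 / L := by
      rw [div_le_div_iff₀ hLb2 hL0]
      nlinarith
    rcases lt_or_ge b2 (c * b1) with hclose | hfar
    · -- close case : impossible
      have hb1pos : 0 < b1 := by nlinarith
      set x := max (c * b1) t2 + 1 with hxdef
      have hcb : b1 < c * b1 := by nlinarith
      have hxb : b1 < x := by
        have := le_max_left (c * b1) t2; simp only [hxdef]; linarith
      have hxf : c * b1 ≤ x := by
        have := le_max_left (c * b1) t2; simp only [hxdef]; linarith
      have hxt : t2 ≤ x := by
        have := le_max_right (c * b1) t2; simp only [hxdef]; linarith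
      have hx0 : 0 < x := lt_of_le_of_lt hb1 hxb
      have key := h2 x hx0.le
      simp only [cost2, alloc2] at key
      rw [alloc1_high_close hbl hclose, alloc1_high_far hxb hxf, max_eq_left hxt] at key
      have hxe : b1 / (L * x) * x = b1 / L := by field_simp
      rw [hxe, show b1 / L = 1 / L * b1 from by ring] at key
      have hm2 : b2 ≤ max b2 t2 := le_max_left _ _
      have p1 : (1 - 1/L) * b2 ≤ (1 - 1/L) * max b2 t2 :=
        mul_le_mul_of_nonneg_left hm2 (by linarith)
      have p2 : (1/L) * b1 < (1/2) * b1 := mul_lt_mul_of_pos_right hw hb1pos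
      have p3 : (1/L) * b2 < (1/2) * b2 := mul_lt_mul_of_pos_right hw hb2pos
      linarith
    · -- far case
      have ht1b : t1 ≤ b1 := by
        by_contra hgt
        push_neg at hgt
        rcases le_or_gt (c * t1) b2 with ha | hb'
        · have ht1b2 : t1 < b2 := lt_of_lt_of_le (by nlinarith) ha
          have key := h1 t1 ht1
          rw [cost1, cost1, alloc1_low_far hbl hfar, alloc1_low_far ht1b2 ha,
            max_eq_right hgt.le, max_self] at key
          have h3 : t1 / (L * b2) ≤ b1 / (L * b2) := by nlinarith [key, ht1pos]
          rw [div_le_div_iff₀ hLb2 hLb2] at h3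
          nlinarith [h3, hLb2, hgt]
        · rcases lt_or_ge t1 b2 with hblt | hcge
          · have key := h1 t1 ht1
            rw [cost1, cost1, alloc1_low_far hbl hfar, alloc1_low_close hblt hb',
              max_eq_right hgt.le, max_self] at key
            nlinarith [key, hub, hw, ht1pos]
          · set x := max (c * b2) t1 + 1 with hxdef
            have hcb : b2 < c * b2 := by nlinarith
            have hxb : b2 < x := by
              have := le_max_left (c * b2) t1; simp only [hxdef]; linarith
            have hxf : c * b2 ≤ x := by
              have := le_max_left (c * b2) t1; simp only [hxdef]; linarith
            have hxt : t1 ≤ x := by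
              have := le_max_right (c * b2) t1; simp only [hxdef]; linarith
            have hx0 : 0 < x := lt_of_le_of_lt hb2 hxb
            have key := h1 x hx0.le
            rw [cost1, cost1, alloc1_low_far hbl hfar, alloc1_high_far hxb hxf,
              max_eq_right hgt.le, max_eq_left hxt] at key
            have hxe : b2 / (L * x) * x = b2 / L := by field_simp
            rw [hxe, show b2 / L = 1 / L * b2 from by ring] at key
            have p1 : b1 / (L * b2) * t1 ≤ 1 / L * t1 :=
              mul_le_mul_of_nonneg_right hub ht1
            have p2 : (1 - 1/L) * b2 ≤ (1 - 1/L) * t1 :=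
              mul_le_mul_of_nonneg_left hcge (by linarith)
            have p3 : (1/L) * b2 < (1/2) * b2 := mul_lt_mul_of_pos_right hw hb2pos
            linarith [key, p1, p2, p3]
      have hb1pos : 0 < b1 := lt_of_lt_of_le ht1pos ht1b
      have ht2b1 : t2 < b1 := lt_of_lt_of_le hcon ht1b
      set x := (max (b1 / c) t2 + b1) / 2 with hxdef
      have hmlt : max (b1 / c) t2 < b1 := max_lt (div_lt_self hb1pos hc) ht2b1
      have hx1 : x < b1 := by simp only [hxdef]; linarith
      have hx2 : max (b1 / c) t2 < x := by simp only [hxdef]; linarith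
      have hxt2 : t2 < x := lt_of_le_of_lt (le_max_right _ _) hx2
      have hxc : b1 < c * x := by
        have h' : b1 / c < x := lt_of_le_of_lt (le_max_left _ _) hx2
        rw [div_lt_iff₀ hc0] at h'
        linarith [h']
      have hx0 : 0 < x := lt_of_le_of_lt ht2 hxt2
      have key := h2 x hx0.le
      simp only [cost2, alloc2] at key
      rw [alloc1_high_far hbl hfar, alloc1_low_close hx1 hxc, max_eq_left hxt2.le] at key
      have hm2 : b2 ≤ max b2 t2 := le_max_left _ _
      have p := mul_le_mul_of_nonneg_left hm2 (le_of_lt (div_pos hb1pos hLb2))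
      have hxe : b1 / (L * b2) * b2 = 1 / L * b1 := by field_simp
      have p2 : (1/L) * x < (1/L) * b1 := mul_lt_mul_of_pos_left hx1 hw0
      linarith [p, key, p2, hxe]
end

section
/- Consider the algorithm A^(2)_{L,c} on two machines with true execution times t₁, t₂ ≥ 0. At any pure Nash equilibrium (t̂₁, t̂₂), the expected makespan M(t̂₁,t̂₂) = a₁(t̂₁,t̂₂)·max(t̂₁,t₁) + a₂(t̂₁,t̂₂)·max(t̂₂,t₂) is at most (1 + 1/L) times the optimal makespan min(t₁, t₂). In other words, the pure Price of Anarchy of A^(2)_{L,c} for scheduling one task on two machines is at most 1 + 1/L. -/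
/-- Bidding a huge value `x` against an opponent bid `b` yields expected cost `b / L`. -/
private lemma cost_big (L c t x b : ℝ) (hL : 0 < L) (hx0 : 0 < x)
    (hbx : b < x) (hcx : c * b < x) (htx : t ≤ x) :
    alloc1 L c x b * max x t = b / L := by
  unfold alloc1
  rw [if_neg hbx.ne', if_neg (not_lt.mpr hbx.le), if_neg (not_lt.mpr hcx.le),
    max_eq_left htx]
  field_simp
  ring

/-- Expected cost at the huge deviation `max (c*b) t + 1`. -/
private lemma cost_big' (L c t b : ℝ) (hL : 0 < L) (hc : 1 < c) (hb : 0 ≤ b) :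
    alloc1 L c (max (c * b) t + 1) b * max (max (c * b) t + 1) t = b / L := by
  have hcb1 : b ≤ c * b := by nlinarith
  have h1 : c * b ≤ max (c * b) t := le_max_left _ _
  have h2 : t ≤ max (c * b) t := le_max_right _ _
  exact cost_big L c t _ b hL (by linarith) (by linarith) (by linarith) (by linarith)

set_option maxHeartbeats 1000000 in
private lemma key (L c t1 t2 b1 b2 : ℝ)
    (hL : 2 < L) (hc : 1 < c)
    (ht1 : 0 ≤ t1) (ht2 : 0 ≤ t2)
    (hb1 : 0 ≤ b1) (hb2 : 0 ≤ b2)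
    (hb : b1 ≤ b2)
    (heq : IsEquilibrium2 L c t1 t2 b1 b2) :
    alloc1 L c b1 b2 * max b1 t1 + alloc2 L c b1 b2 * max b2 t2 ≤
      (1 + 1 / L) * min t1 t2 := by
  obtain ⟨h1, h2⟩ := heq
  have hL0 : (0:ℝ) < L := by linarith
  have hc0 : (0:ℝ) < c := by linarith
  -- machine 2's huge deviation: her equilibrium cost is at most b1 / L
  have hdev2 : alloc1 L c b2 b1 * max b2 t2 ≤ b1 / L := by
    have hx0pos : 0 < max (c * b1) t2 + 1 := by
      have : (0:ℝ) ≤ max (c * b1) t2 := le_trans ht2 (le_max_right _ _)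
      linarith
    have h := h2 (max (c * b1) t2 + 1) hx0pos.le
    unfold cost2 alloc2 at h
    rwa [cost_big' L c t2 b1 hL0 hc hb1] at h
  rcases eq_or_lt_of_le hb with heqb | hlt
  · -- Case b1 = b2
    subst heqb
    have ha : alloc1 L c b1 b1 = 1/2 := by unfold alloc1; rw [if_pos rfl]
    rw [ha] at hdev2
    -- machine 1's huge deviation
    have hdev1 : (1/2 : ℝ) * max b1 t1 ≤ b1 / L := by
      have hx0pos : 0 < max (c * b1) t1 + 1 := by
        have : (0:ℝ) ≤ max (c * b1) t1 := le_trans ht1 (le_max_right _ _)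
        linarith
      have h := h1 (max (c * b1) t1 + 1) hx0pos.le
      unfold cost1 at h
      rw [cost_big' L c t1 b1 hL0 hc hb1] at h
      rwa [ha] at h
    have hbz : b1 = 0 := by
      by_contra h
      have hbpos : 0 < b1 := lt_of_le_of_ne hb1 (Ne.symm h)
      have h1' : b1 ≤ max b1 t1 := le_max_left _ _
      have h2' : b1 / 2 ≤ b1 / L := le_trans (by linarith) hdev1
      rw [div_le_div_iff₀ (by norm_num) hL0] at h2'
      nlinarith
    subst hbz
    have ht1z : t1 = 0 := by
      have h1' : t1 ≤ max 0 t1 := le_max_right _ _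
      have h : t1 / 2 ≤ 0 / L := le_trans (by linarith) hdev1
      rw [zero_div] at h; linarith
    have ht2z : t2 = 0 := by
      have h2' : t2 ≤ max 0 t2 := le_max_right _ _
      have h : t2 / 2 ≤ 0 / L := le_trans (by linarith) hdev2
      rw [zero_div] at h; linarith
    subst ht1z; subst ht2z
    simp [alloc2, ha]
  · -- Case b1 < b2
    have hb2pos : 0 < b2 := lt_of_le_of_lt hb1 hlt
    by_cases hcb : b2 < c * b1
    · -- impossible subcase
      exfalso
      have ha2 : alloc1 L c b2 b1 = 1 - 1/L := by
        unfold alloc1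
        rw [if_neg hlt.ne', if_neg (not_lt.mpr hlt.le), if_pos hcb]
      rw [ha2] at hdev2
      have hm : b2 ≤ max b2 t2 := le_max_left _ _
      have hiL : (1:ℝ)/L < 1/2 := by
        rw [div_lt_div_iff₀ hL0 (by norm_num)]; linarith
      have step : (1 - 1/L) * b2 ≤ b1 / L :=
        le_trans (mul_le_mul_of_nonneg_left hm (by linarith)) hdev2
      have step2 : (1 - 1/L) * b2 * L ≤ b1 / L * L :=
        mul_le_mul_of_nonneg_right step hL0.le
      have e1 : (1 - 1/L) * b2 * L = (L - 1) * b2 := by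
        linear_combination (-b2) * div_mul_cancel₀ (1:ℝ) hL0.ne'
      have e2 : b1 / L * L = b1 := div_mul_cancel₀ b1 hL0.ne'
      rw [e1, e2] at step2
      -- (L-1) b2 ≤ b1 < b2 with L > 2, b2 > 0 : contradiction
      nlinarith [mul_pos (show (0:ℝ) < L - 2 by linarith) hb2pos]
    · -- main subcase: c * b1 ≤ b2
      have hcb' : c * b1 ≤ b2 := not_lt.mp hcb
      have ha1 : alloc1 L c b1 b2 = 1 - b1 / (L * b2) := by
        unfold alloc1
        rw [if_neg hlt.ne, if_pos hlt, if_neg hcb]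
      have ha2 : alloc1 L c b2 b1 = b1 / (L * b2) := by
        unfold alloc1
        rw [if_neg hlt.ne', if_neg (not_lt.mpr hlt.le), if_neg hcb]
        ring
      have hLb2 : 0 < L * b2 := by positivity
      have ha2' : alloc2 L c b1 b2 = b1 / (L * b2) := ha2
      -- the allocation ratio is at most 1/(L c)
      have hr : b1 / (L * b2) ≤ 1 / (L * c) := by
        rw [div_le_div_iff₀ hLb2 (by positivity)]
        calc b1 * (L * c) = L * (c * b1) := by ring
          _ ≤ L * b2 := mul_le_mul_of_nonneg_left hcb' hL0.le
          _ = 1 * (L * b2) := by ring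
      have hiLc : (1:ℝ) / (L * c) < 1/2 := by
        rw [div_lt_div_iff₀ (by positivity) (by norm_num)]; nlinarith
      have hiL : (1:ℝ)/L < 1/2 := by
        rw [div_lt_div_iff₀ hL0 (by norm_num)]; linarith
      have hrnn : 0 ≤ b1 / (L * b2) := by positivity
      -- Step A : b1 * max b2 t2 ≤ b1 * b2
      have stepA : b1 * max b2 t2 ≤ b1 * b2 := by
        rw [ha2, div_mul_eq_mul_div, div_le_div_iff₀ hLb2 hL0] at hdev2
        nlinarith [hdev2]
      -- Step B : c * t1 ≤ b2
      have stepB : c * t1 ≤ b2 := by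
        by_contra h'
        push_neg at h'
        have ht1pos : 0 < t1 := by nlinarith
        set x : ℝ := min t1 ((b2 / c + b2) / 2) with hxdef
        have hbcb : b2 / c < b2 := by rw [div_lt_iff₀ hc0]; nlinarith
        have hmid1 : b2 / c < (b2 / c + b2) / 2 := by linarith
        have hmid2 : (b2 / c + b2) / 2 < b2 := by linarith
        have ht1gt : b2 / c < t1 := by rw [div_lt_iff₀ hc0]; nlinarith
        have hx1 : b2 / c < x := lt_min ht1gt hmid1
        have hx2 : x < b2 := lt_of_le_of_lt (min_le_right _ _) hmid2
        have hx3 : x ≤ t1 := min_le_left _ _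
        have hx0 : 0 < x := by
          have : 0 < b2 / c := by positivity
          linarith
        have hb2cx : b2 < c * x := by
          rw [div_lt_iff₀ hc0] at hx1; linarith [mul_comm x c ▸ hx1]
        have hax : alloc1 L c x b2 = 1/L := by
          unfold alloc1
          rw [if_neg hx2.ne, if_pos hx2, if_pos hb2cx]
        have hdev := h1 x hx0.le
        unfold cost1 at hdev
        rw [hax, max_eq_right hx3, ha1] at hdev
        -- (1 - b1/(L b2)) * max b1 t1 ≤ (1/L) * t1
        have hkey : (1 - b1 / (L * b2)) * t1 ≤ 1 / L * t1 :=
          le_trans (mul_le_mul_of_nonneg_left (le_max_right b1 t1)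
            (by linarith)) hdev
        have p1 : b1 / (L * b2) * t1 ≤ 1 / (L * c) * t1 :=
          mul_le_mul_of_nonneg_right hr ht1
        have p2 : 1 / (L * c) * t1 < (1/2) * t1 :=
          mul_lt_mul_of_pos_right hiLc ht1pos
        have p3 : 1 / L * t1 < (1/2) * t1 :=
          mul_lt_mul_of_pos_right hiL ht1pos
        linarith [hkey, p1, p2, p3]
      -- consequences of Step B
      have hb1b2 : b1 ≤ b2 := hb
      have ht1b2 : t1 < b2 := by
        rcases eq_or_lt_of_le ht1 with h0 | hpos
        · linarith
        · have h := mul_lt_mul_of_pos_right hc hpos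
          rw [one_mul] at h
          linarith
      -- Step C : the deviation x = t1
      have star : (1 - b1 / (L * b2)) * max b1 t1 ≤ (1 - t1 / (L * b2)) * t1 := by
        have hdev := h1 t1 ht1
        unfold cost1 at hdev
        rw [ha1] at hdev
        have hat : alloc1 L c t1 b2 = 1 - t1 / (L * b2) := by
          unfold alloc1
          rw [if_neg ht1b2.ne, if_pos ht1b2, if_neg (not_lt.mpr stepB)]
        rw [hat, max_self] at hdev
        exact hdev
      -- Step D : t1 = b1
      have hfacpos : (0:ℝ) < 1 - b1 / (L * b2) := by linarith
      have ht1b1 : t1 = b1 := by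
        have hi : (1 - b1 / (L * b2)) * t1 ≤ (1 - t1 / (L * b2)) * t1 :=
          le_trans (mul_le_mul_of_nonneg_left (le_max_right b1 t1) hfacpos.le) star
        have hii : (1 - b1 / (L * b2)) * b1 ≤ (1 - t1 / (L * b2)) * t1 :=
          le_trans (mul_le_mul_of_nonneg_left (le_max_left b1 t1) hfacpos.le) star
        have hi' : t1 * (t1 - b1) ≤ 0 := by
          have h := mul_le_mul_of_nonneg_right hi hLb2.le
          have e1 : (1 - b1 / (L * b2)) * t1 * (L * b2) = t1 * (L * b2) - b1 * t1 := by
            linear_combination (-t1) * div_mul_cancel₀ b1 hLb2.ne'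
          have e2 : (1 - t1 / (L * b2)) * t1 * (L * b2) = t1 * (L * b2) - t1 * t1 := by
            linear_combination (-t1) * div_mul_cancel₀ t1 hLb2.ne'
          rw [e1, e2] at h
          nlinarith
        have hii' : (b1 - t1) * (L * b2 - b1 - t1) ≤ 0 := by
          have h := mul_le_mul_of_nonneg_right hii hLb2.le
          have e1 : (1 - b1 / (L * b2)) * b1 * (L * b2) = b1 * (L * b2) - b1 * b1 := by
            linear_combination (-b1) * div_mul_cancel₀ b1 hLb2.ne'
          have e2 : (1 - t1 / (L * b2)) * t1 * (L * b2) = t1 * (L * b2) - t1 * t1 := by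
            linear_combination (-t1) * div_mul_cancel₀ t1 hLb2.ne'
          rw [e1, e2] at h
          nlinarith
        have hsum : b1 + t1 < L * b2 := by
          nlinarith [mul_nonneg (show (0:ℝ) ≤ L - 2 by linarith) hb2pos.le]
        have hb1t1 : b1 ≤ t1 := by nlinarith [hii', hsum]
        rcases eq_or_lt_of_le ht1 with h0 | hpos
        · rw [← h0] at hb1t1 ⊢; linarith
        · have : t1 ≤ b1 := by nlinarith
          linarith
      -- now finish
      rw [ha1, ha2', ht1b1, max_self]
      rcases eq_or_lt_of_le hb1 with hb1z | hb1pos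
      · -- b1 = 0
        rw [← hb1z]
        rw [min_eq_left ht2]
        simp
      · -- b1 > 0
        have hmax2 : max b2 t2 = b2 := by
          rcases max_cases b2 t2 with ⟨h, _⟩ | ⟨h, hle⟩
          · exact h
          · rw [h]; rw [h] at stepA; nlinarith
        -- Step F : b1 ≤ t2
        have stepF : b1 ≤ t2 := by
          by_contra h'
          push_neg at h'
          set x : ℝ := (max (b1 / c) t2 + b1) / 2 with hxdef
          have hbc : b1 / c < b1 := by rw [div_lt_iff₀ hc0]; nlinarith
          have hm : max (b1 / c) t2 < b1 := max_lt hbc h'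
          have hx_lt : x < b1 := by
            rw [hxdef]; linarith
          have hx_gt : max (b1 / c) t2 < x := by
            rw [hxdef]; linarith
          have hx_gt_t2 : t2 ≤ x := le_trans (le_max_right _ _) hx_gt.le
          have hx_gt_c : b1 / c < x := lt_of_le_of_lt (le_max_left _ _) hx_gt
          have hx0 : 0 < x := by
            have : 0 < b1 / c := by positivity
            linarith
          have hb1cx : b1 < c * x := by
            rw [div_lt_iff₀ hc0] at hx_gt_c; linarith [mul_comm x c ▸ hx_gt_c]
          have hax : alloc1 L c x b1 = 1/L := by
            unfold alloc1
            rw [if_neg hx_lt.ne, if_pos hx_lt, if_pos hb1cx]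
          have hdev := h2 x hx0.le
          unfold cost2 alloc2 at hdev
          rw [hax, max_eq_left hx_gt_t2, ha2, hmax2] at hdev
          have e : b1 / (L * b2) * b2 = b1 / L := by
            rw [div_mul_eq_mul_div, div_eq_div_iff hLb2.ne' hL0.ne']; ring
          rw [e] at hdev
          -- b1 / L ≤ 1/L * x with x < b1 : contradiction
          have h := mul_le_mul_of_nonneg_right hdev hL0.le
          have e1 : b1 / L * L = b1 := div_mul_cancel₀ b1 hL0.ne'
          have e2 : 1 / L * x * L = x := by
            linear_combination x * div_mul_cancel₀ (1:ℝ) hL0.ne'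
          rw [e1, e2] at h
          linarith
        rw [hmax2, min_eq_left stepF]
        have e : b1 / (L * b2) * b2 = b1 / L := by
          rw [div_mul_eq_mul_div, div_eq_div_iff hLb2.ne' hL0.ne']; ring
        rw [e]
        -- (1 - r) b1 + b1/L ≤ (1 + 1/L) b1, since r b1 ≥ 0
        have hprod := mul_nonneg hrnn hb1
        have expand : (1 - b1 / (L * b2)) * b1 = b1 - b1 / (L * b2) * b1 := by ring
        have expand2 : (1 + 1 / L) * b1 = b1 + 1 / L * b1 := by ring
        have e3 : b1 / L = 1 / L * b1 := by ring
        linarith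

/-- At any pure Nash equilibrium `(b1, b2)` of `A^(2)_{L,c}`, the expected makespan
`a1 * max b1 t1 + a2 * max b2 t2` is at most `(1 + 1/L)` times the optimal makespan
`min t1 t2`: the pure Price of Anarchy of `A^(2)_{L,c}` is at most `1 + 1/L`. -/
theorem poa_two_machines
    (L c t1 t2 b1 b2 : ℝ)
    (hL : 2 < L) (hc : 1 < c)
    (ht1 : 0 ≤ t1) (ht2 : 0 ≤ t2)
    (hb1 : 0 ≤ b1) (hb2 : 0 ≤ b2)
    (heq : IsEquilibrium2 L c t1 t2 b1 b2) :
    alloc1 L c b1 b2 * max b1 t1 + alloc2 L c b1 b2 * max b2 t2 ≤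
      (1 + 1 / L) * min t1 t2 := by
  rcases le_total b1 b2 with h | h
  · exact key L c t1 t2 b1 b2 hL hc ht1 ht2 hb1 hb2 h heq
  · have heq' : IsEquilibrium2 L c t2 t1 b2 b1 := by
      constructor
      · intro x hx
        have h' := heq.2 x hx
        simp only [cost1, cost2, alloc2] at h' ⊢
        exact h'
      · intro x hx
        have h' := heq.1 x hx
        simp only [cost1, cost2, alloc2] at h' ⊢
        exact h'
    have h'' := key L c t2 t1 b2 b1 hL hc ht2 ht1 hb2 hb1 h heq'
    have e1 : alloc2 L c b2 b1 = alloc1 L c b1 b2 := rfl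
    have e2 : alloc1 L c b2 b1 = alloc2 L c b1 b2 := rfl
    rw [e1, e2, min_comm] at h''
    linarith
end

section
/- Consider the algorithm A^(2)_{L,c} on two machines with true execution times t₁, t₂ ≥ 0 satisfying t₁ ≤ t₂. The declaration pair (t̂₁, t̂₂) = (t₁, max(L·c·t₁, t₂)) is a pure Nash equilibrium of A^(2)_{L,c}; in particular, a pure Nash equilibrium always exists. -/
set_option maxHeartbeats 1000000


lemma alloc1_nonneg (L c x1 x2 : ℝ) (hL : 2 < L) (h1 : 0 ≤ x1) (h2 : 0 ≤ x2) :
    0 ≤ alloc1 L c x1 x2 := by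
  have hLpos : (0:ℝ) < L := by linarith
  unfold alloc1
  split_ifs with h h' h'' h''
  · norm_num
  · positivity
  · have hx2 : 0 < x2 := lt_of_le_of_lt h1 h'
    have : x1 / (L * x2) ≤ 1 := by
      rw [div_le_one (by positivity)]
      nlinarith
    linarith
  · have : 1 / L ≤ 1 := by
      rw [div_le_one hLpos]; linarith
    linarith
  · have hx1 : 0 < x1 := by
      rcases lt_or_eq_of_le h2 with h2' | h2'
      · exact lt_trans h2' (lt_of_le_of_ne (not_lt.mp h') (Ne.symm h))
      · exact lt_of_le_of_ne h1 (fun hh => h (by rw [← hh, ← h2']))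
    have : 0 ≤ x2 / (L * x1) := by positivity
    linarith

lemma equilibrium_aux (L c t1 t2 B : ℝ)
    (hL : 2 < L) (hc : 1 < c)
    (ht1 : 0 ≤ t1) (ht2 : 0 ≤ t2) (hord : t1 ≤ t2)
    (hBge : L * c * t1 ≤ B) (hBt2 : t2 ≤ B) :
    IsEquilibrium2 L c t1 t2 t1 B := by
  have hLpos : (0:ℝ) < L := by linarith
  have hcpos : (0:ℝ) < c := by linarith
  have hB0 : 0 ≤ B := le_trans ht2 hBt2
  rcases eq_or_lt_of_le ht1 with ht0 | ht1'
  · -- t1 = 0 case: equilibrium costs are 0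
    have ht0' : t1 = 0 := ht0.symm
    subst ht0'
    constructor
    · intro x hx
      have h1 : cost1 L c 0 0 B = 0 := by simp [cost1]
      rw [h1]
      exact mul_nonneg (alloc1_nonneg L c x B hL hx hB0) (le_max_right x 0)
    · intro x hx
      have h2 : cost2 L c t2 0 B = 0 := by
        unfold cost2 alloc2 alloc1
        rcases eq_or_lt_of_le hB0 with hB0' | hBpos
        · have ht2' : t2 = 0 := le_antisymm (hB0' ▸ hBt2) ht2
          simp [← hB0', ht2']
        · rw [if_neg (by linarith : ¬ B = 0), if_neg (by linarith : ¬ B < 0),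
            if_neg (by simp; positivity : ¬ B < c * 0)]
          simp
      rw [h2]
      exact mul_nonneg (alloc1_nonneg L c x 0 hL hx le_rfl)
        (le_trans ht2 (le_max_right x t2))
  · -- t1 > 0 case
    have hLc2 : 2 < L * c := by nlinarith
    have hB2t1 : 2 * t1 < B := by nlinarith
    have ht1B : t1 < B := by linarith
    have hBpos : 0 < B := by linarith
    have hct1B : c * t1 ≤ B := by nlinarith
    have hLB : 0 < L * B := by positivity
    have e1 : alloc1 L c t1 B = 1 - t1 / (L * B) := by
      unfold alloc1
      rw [if_neg ht1B.ne, if_pos ht1B, if_neg (not_lt.2 hct1B)]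
    have e2 : alloc1 L c B t1 = t1 / (L * B) := by
      unfold alloc1
      rw [if_neg ht1B.ne', if_neg (not_lt.2 ht1B.le), if_neg (not_lt.2 hct1B)]
      ring
    have hdivnn : 0 ≤ t1 / (L * B) := by positivity
    have hLE1 : (1 - t1 / (L * B)) * t1 ≤ t1 := by nlinarith
    have hc1 : cost1 L c t1 t1 B = (1 - t1 / (L * B)) * t1 := by
      rw [cost1, e1, max_self]
    have hc2 : cost2 L c t2 t1 B = t1 / L := by
      rw [cost2, alloc2, e2, max_eq_left hBt2]
      field_simp
    have h1L2 : 1 / L ≤ 1 / 2 := by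
      rw [div_le_div_iff₀ hLpos two_pos]; linarith
    constructor
    · -- machine 1
      intro x hx
      rw [hc1, cost1]
      rcases lt_trichotomy x B with hlt | heq | hgt
      · unfold alloc1
        rw [if_neg hlt.ne, if_pos hlt]
        by_cases hcb : B < c * x
        · rw [if_pos hcb]
          have hLt1x : L * t1 < x := by nlinarith
          have hxt1 : t1 < x := by nlinarith
          rw [max_eq_left hxt1.le]
          have : t1 ≤ 1 / L * x := by
            rw [one_div, inv_mul_eq_div, le_div_iff₀ hLpos]; nlinarith
          linarith
        · rw [if_neg hcb]
          by_cases hxt : t1 ≤ x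
          · rw [max_eq_left hxt]
            have l1 : (1 - t1 / (L * B)) * t1 = (L * B - t1) * t1 / (L * B) := by
              field_simp
            have l2 : (1 - x / (L * B)) * x = (L * B - x) * x / (L * B) := by
              field_simp
            rw [l1, l2, div_le_div_iff₀ hLB hLB]
            have hsum : x + t1 ≤ L * B := by nlinarith [mul_pos (show (0:ℝ) < L - 2 by linarith) hBpos]
            have key : 0 ≤ (x - t1) * (L * B - x - t1) :=
              mul_nonneg (by linarith) (by linarith)
            nlinarith [key]
          · push_neg at hxt
            rw [max_eq_right hxt.le]
            have hxd : x / (L * B) ≤ t1 / (L * B) := by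
              gcongr <;> linarith
            nlinarith
      · subst heq
        rw [alloc1, if_pos rfl, max_eq_left ht1B.le]
        linarith
      · unfold alloc1
        rw [if_neg hgt.ne', if_neg (not_lt.2 hgt.le)]
        have hxt1 : t1 ≤ x := by linarith
        rw [max_eq_left hxt1]
        by_cases hcx : x < c * B
        · rw [if_pos hcx]
          nlinarith [mul_nonneg (show (0:ℝ) ≤ 1/2 - 1/L by linarith) hx]
        · rw [if_neg hcx]
          have hxpos : 0 < x := lt_trans hBpos hgt
          have heq2 : (1 - (1 - B / (L * x))) * x = B / L := by
            field_simp
            ring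
          have hBL : t1 ≤ B / L := by
            rw [le_div_iff₀ hLpos]; nlinarith
          linarith
    · -- machine 2
      intro x hx
      rw [hc2, cost2, alloc2]
      have hmax2 : t1 ≤ max x t2 := le_trans hord (le_max_right x t2)
      have hmaxx : x ≤ max x t2 := le_max_left x t2
      have hmaxnn : 0 ≤ max x t2 := le_trans ht1 hmax2
      have ht1L : t1 / L ≤ 1 / 2 * t1 := by
        rw [div_le_iff₀ hLpos]; nlinarith
      rcases lt_trichotomy x t1 with hlt | heq | hgt
      · unfold alloc1
        rw [if_neg hlt.ne, if_pos hlt]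
        by_cases hcx : t1 < c * x
        · rw [if_pos hcx]
          have : 1 / L * t1 ≤ 1 / L * max x t2 :=
            mul_le_mul_of_nonneg_left hmax2 (by positivity)
          have e : t1 / L = 1 / L * t1 := by ring
          linarith
        · rw [if_neg hcx]
          have hLt1 : 0 < L * t1 := by positivity
          have hfrac : x / (L * t1) ≤ 1 / L := by
            rw [div_le_div_iff₀ hLt1 hLpos]; nlinarith
          have halloc : 1 / L ≤ 1 - x / (L * t1) := by linarith
          calc t1 / L = 1 / L * t1 := by ring
            _ ≤ (1 - x / (L * t1)) * max x t2 :=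
              mul_le_mul halloc hmax2 ht1 (by linarith)
      · subst heq
        rw [alloc1, if_pos rfl]
        have : 1 / 2 * x ≤ 1 / 2 * max x t2 :=
          mul_le_mul_of_nonneg_left hmax2 (by norm_num)
        linarith
      · unfold alloc1
        rw [if_neg hgt.ne', if_neg (not_lt.2 hgt.le)]
        by_cases hcx : x < c * t1
        · rw [if_pos hcx]
          have halloc : 1 / L ≤ 1 - 1 / L := by linarith
          calc t1 / L = 1 / L * t1 := by ring
            _ ≤ (1 - 1 / L) * max x t2 :=
              mul_le_mul halloc hmax2 ht1 (by linarith)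
        · rw [if_neg hcx]
          have hxpos : 0 < x := lt_of_le_of_lt ht1 hgt
          have e : (1 - (1 - t1 / (L * x))) = t1 / (L * x) := by ring
          rw [e]
          have heq2 : t1 / (L * x) * x = t1 / L := by
            field_simp
          have : t1 / (L * x) * x ≤ t1 / (L * x) * max x t2 :=
            mul_le_mul_of_nonneg_left hmaxx (by positivity)
          linarith

/-- For true times `t1 ≤ t2`, the declaration pair `(t1, max (L * c * t1) t2)` is a
pure Nash equilibrium of `A^(2)_{L,c}`; in particular, a pure Nash equilibrium
always exists. -/
theorem equilibrium_exists_two_machines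
    (L c t1 t2 : ℝ)
    (hL : 2 < L) (hc : 1 < c)
    (ht1 : 0 ≤ t1) (ht2 : 0 ≤ t2)
    (hord : t1 ≤ t2) :
    IsEquilibrium2 L c t1 t2 t1 (max (L * c * t1) t2) ∧
      ∃ b1 b2 : ℝ, 0 ≤ b1 ∧ 0 ≤ b2 ∧ IsEquilibrium2 L c t1 t2 b1 b2 := by
  have main := equilibrium_aux L c t1 t2 (max (L * c * t1) t2) hL hc ht1 ht2 hord
    (le_max_left _ _) (le_max_right _ _)
  exact ⟨main, t1, _, ht1, le_trans ht2 (le_max_right _ _), main⟩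
end

section
/- Consider the algorithm A_{L,c} on n machines with true execution times t ∈ ℝ_{≥0}^n. At any pure Nash equilibrium t̂, the second smallest declaration exceeds the minimum declaration by at least a factor of c: t̂_sec ≥ c·t̂_min. -/
open Finset

/-- The minimum declaration among the `n` machines. -/
noncomputable def xmin {n : ℕ} (x : Fin n → ℝ) : ℝ := ⨅ i, x i

open scoped Classical in
/-- The set of machines making the minimum declaration. -/
noncomputable def Nmin {n : ℕ} (x : Fin n → ℝ) : Finset (Fin n) :=
  Finset.univ.filter fun i => x i = xmin x

/-- The second smallest declaration: the minimum declaration among machines outside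
`Nmin x` (equal to `xmin x` if all machines make the minimum declaration). -/
noncomputable def xsec {n : ℕ} (x : Fin n → ℝ) : ℝ :=
  if h : (Finset.univ \ Nmin x).Nonempty then (Finset.univ \ Nmin x).inf' h x
  else xmin x

open scoped Classical in
/-- The set of machines declaring the second smallest declaration. -/
noncomputable def Nsec {n : ℕ} (x : Fin n → ℝ) : Finset (Fin n) :=
  Finset.univ.filter fun i => x i = xsec x

/-- The probability with which the algorithm `A_{L,c}` assigns the single task to
machine `i`, given the declared execution times `x`. -/
noncomputable def alloc {n : ℕ} (L c : ℝ) (x : Fin n → ℝ) (i : Fin n) : ℝ :=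
  if xmin x = xsec x then 1 / n
  else if xsec x < c * xmin x then
    (if i ∈ Nmin x then (1 / L) / (Nmin x).card
     else if i ∈ Nsec x then (1 - 1 / L) / (Nsec x).card
     else 0)
  else
    (if i ∈ Nmin x then
      (1 - ∑ k ∈ Finset.univ \ Nmin x, xmin x / (L * x k)) / (Nmin x).card
     else xmin x / (L * x i))

/-- The expected cost of machine `i` (with true times `t`) at declarations `x`,
when machines are bound by their declarations. -/
noncomputable def cost {n : ℕ} (L c : ℝ) (t x : Fin n → ℝ) (i : Fin n) : ℝ :=
  alloc L c x i * max (x i) (t i)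

/-- `b` is a pure Nash equilibrium of `A_{L,c}` for true times `t`: no machine can
strictly decrease her expected cost by unilaterally changing her declaration to any
other nonnegative value. -/
def IsEquilibrium {n : ℕ} (L c : ℝ) (t b : Fin n → ℝ) : Prop :=
  ∀ i : Fin n, ∀ x : ℝ, 0 ≤ x →
    cost L c t b i ≤ cost L c t (Function.update b i x) i

/-!
Suppose `xsec b < c * xmin b` at an equilibrium `b`; then `xmin b > 0`. A machine `j` that is
not alone at the minimum can always declare a huge value `v ≥ c * xmin b`: it becomes a
non-minimal machine in the far regime (or gets nothing), so its cost drops to at most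
`xmin b / L`. If all declarations are equal, every machine pays at least `xmin b / n`; otherwise
a machine declaring `xsec b` pays at least `(1 - 1/L) / m * xsec b` with `m ≤ n - 1`. Both exceed
`xmin b / L` because `L > 2(n - 1) ≥ n`.
-/

section Declarations

variable {n : ℕ} (x : Fin n → ℝ)

theorem xmin_le (i : Fin n) : xmin x ≤ x i :=
  ciInf_le (Finite.bddBelow_range x) i

theorem exists_eq_xmin [Nonempty (Fin n)] : ∃ i, x i = xmin x :=
  exists_eq_ciInf_of_finite

variable {x}

theorem mem_Nmin {i : Fin n} : i ∈ Nmin x ↔ x i = xmin x := by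
  simp [Nmin]

theorem mem_Nsec {i : Fin n} : i ∈ Nsec x ↔ x i = xsec x := by
  simp [Nsec]

theorem xmin_lt_xsec {i : Fin n} (hi : i ∉ Nmin x) : xmin x < xsec x := by
  have hne : (univ \ Nmin x).Nonempty := ⟨i, by simpa using hi⟩
  rw [xsec, dif_pos hne, lt_inf'_iff]
  intro k hk
  exact (xmin_le x k).lt_of_ne fun h => (mem_sdiff.mp hk).2 (mem_Nmin.mpr h.symm)

theorem eq_xmin_of_xsec_eq (h : xsec x = xmin x) (i : Fin n) : x i = xmin x := by
  by_contra hi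
  exact (xmin_lt_xsec (mt mem_Nmin.mp hi)).ne' h

theorem exists_eq_xsec (h : xmin x < xsec x) : ∃ j, j ∉ Nmin x ∧ x j = xsec x := by
  by_cases hne : (univ \ Nmin x).Nonempty
  · obtain ⟨j, hj, hje⟩ := exists_mem_eq_inf' hne x
    exact ⟨j, (mem_sdiff.mp hj).2, by rw [xsec, dif_pos hne, hje]⟩
  · rw [xsec, dif_neg hne] at h
    exact absurd h (lt_irrefl _)

theorem xmin_le_xsec : xmin x ≤ xsec x := by
  by_cases hne : (univ \ Nmin x).Nonempty
  · obtain ⟨j, -, hj⟩ := exists_mem_eq_inf' hne x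
    rw [xsec, dif_pos hne, hj]
    exact xmin_le x j
  · rw [xsec, dif_neg hne]

theorem xmin_update_of_lt {i₀ j : Fin n} (hi₀j : i₀ ≠ j) (hi₀ : x i₀ = xmin x) {v : ℝ}
    (hv : xmin x < v) : xmin (Function.update x j v) = xmin x := by
  have : Nonempty (Fin n) := ⟨i₀⟩
  refine le_antisymm ?_ (le_ciInf fun k => ?_)
  · simpa [Function.update_of_ne hi₀j, hi₀] using xmin_le (Function.update x j v) i₀
  · rcases eq_or_ne k j with rfl | hk
    · simpa using hv.le
    · simpa [Function.update_of_ne hk] using xmin_le x k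

end Declarations

section Allocation

variable {n : ℕ} {L c : ℝ} {x : Fin n → ℝ}

theorem alloc_le_of_notMem_Nmin (hL : 0 ≤ L) (hx : 0 ≤ xmin x) {i : Fin n}
    (hi : i ∉ Nmin x) (hci : c * xmin x ≤ x i) :
    alloc L c x i ≤ xmin x / (L * x i) := by
  rw [alloc, if_neg (xmin_lt_xsec hi).ne, if_neg hi]
  split_ifs with hclose hsec
  · exact absurd (mem_Nsec.mp hsec ▸ hclose) (not_lt.mpr hci)
  · exact div_nonneg hx (mul_nonneg hL (hx.trans (xmin_le x i)))
  · exact le_rfl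

theorem div_card_le_cost_of_xsec_eq (t : Fin n → ℝ) (h : xsec x = xmin x) (i : Fin n) :
    x i / n ≤ cost L c t x i := by
  rw [cost, alloc, if_pos h.symm, one_div_mul_eq_div]
  gcongr
  exact le_max_left _ _

theorem mul_xsec_le_cost_of_close (t : Fin n → ℝ) (hL : 1 ≤ L) (h : xmin x < xsec x)
    (hclose : xsec x < c * xmin x) {i : Fin n} (hi : x i = xsec x) :
    (1 - 1 / L) / #(Nsec x) * xsec x ≤ cost L c t x i := by
  have hi_min : i ∉ Nmin x := fun h' => h.ne (mem_Nmin.mp h' ▸ hi)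
  rw [cost, alloc, if_neg h.ne, if_pos hclose, if_neg hi_min, if_pos (mem_Nsec.mpr hi), hi]
  have : 0 ≤ 1 - 1 / L := sub_nonneg.mpr ((div_le_one (by linarith)).mpr hL)
  gcongr
  exact le_max_left _ _

end Allocation

theorem div_lt_one_sub_inv_div_mul {L m a s : ℝ} (hm : 0 < m) (hmL : m + 1 ≤ L) (ha : 0 < a)
    (has : a < s) : a / L < (1 - 1 / L) / m * s := by
  have hL : 0 < L := by linarith
  have hkey : m * a < (L - 1) * s := by nlinarith [mul_lt_mul_of_pos_left has hm]
  calc a / L = m * a / (L * m) := by field_simp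
    _ < (L - 1) * s / (L * m) := by gcongr
    _ = (1 - 1 / L) / m * s := by field_simp

section Equilibrium

variable {n : ℕ} {L c : ℝ} {t b : Fin n → ℝ}

theorem IsEquilibrium.cost_le_xmin_div (heq : IsEquilibrium L c t b) (hL : 0 < L)
    (hb : 0 ≤ xmin b) {i₀ j : Fin n} (hi₀j : i₀ ≠ j) (hi₀ : b i₀ = xmin b) :
    cost L c t b j ≤ xmin b / L := by
  set v := max (max (t j) (c * xmin b)) (xmin b + 1)
  have hv : xmin b < v := (lt_add_one _).trans_le (le_max_right _ _)
  have hv₀ : 0 < v := hb.trans_lt hv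
  have htv : t j ≤ v := (le_max_left _ _).trans (le_max_left _ _)
  have hcv : c * xmin b ≤ v := (le_max_right _ _).trans (le_max_left _ _)
  set b' := Function.update b j v
  have hmin' : xmin b' = xmin b := xmin_update_of_lt hi₀j hi₀ hv
  have hb'j : b' j = v := Function.update_self _ _ _
  have hj' : j ∉ Nmin b' := by
    rw [mem_Nmin, hmin', hb'j]
    exact hv.ne'
  have halloc := alloc_le_of_notMem_Nmin (c := c) hL.le (hmin' ▸ hb) hj' (by rwa [hmin', hb'j])
  calc cost L c t b j ≤ cost L c t b' j := heq j v hv₀.le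
    _ = alloc L c b' j * v := by rw [cost, hb'j, max_eq_left htv]
    _ ≤ xmin b / (L * v) * v := by
        rw [hmin', hb'j] at halloc
        exact mul_le_mul_of_nonneg_right halloc hv₀.le
    _ = xmin b / L := by field_simp

theorem IsEquilibrium.xmin_nonpos_of_xsec_eq (heq : IsEquilibrium L c t b) (hn : 2 ≤ n)
    (hnL : (n : ℝ) < L) (hb : 0 ≤ xmin b) (hsec : xsec b = xmin b) : xmin b ≤ 0 := by
  have : Nontrivial (Fin n) := Fin.nontrivial_iff_two_le.mpr hn
  obtain ⟨i₀, hi₀⟩ := exists_eq_xmin b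
  obtain ⟨j, hj⟩ := exists_ne i₀
  have hupper := heq.cost_le_xmin_div ((n.cast_nonneg).trans_lt hnL) hb hj.symm hi₀
  have hlower := div_card_le_cost_of_xsec_eq (L := L) (c := c) t hsec j
  rw [eq_xmin_of_xsec_eq hsec j] at hlower
  by_contra! hpos
  have : xmin b / L < xmin b / n := div_lt_div_of_pos_left hpos (by positivity) hnL
  linarith

theorem IsEquilibrium.mul_xmin_le_xsec_of_lt (heq : IsEquilibrium L c t b)
    (hnL : (n : ℝ) < L) (hpos : 0 < xmin b) (hsec : xmin b < xsec b) :
    c * xmin b ≤ xsec b := by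
  by_contra! hclose
  obtain ⟨j, hj, hbj⟩ := exists_eq_xsec hsec
  have : Nonempty (Fin n) := ⟨j⟩
  obtain ⟨i₀, hi₀⟩ := exists_eq_xmin b
  have hi₀j : i₀ ≠ j := fun h => hj (mem_Nmin.mpr (h ▸ hi₀))
  have hm_pos : 0 < #(Nsec b) := card_pos.mpr ⟨j, mem_Nsec.mpr hbj⟩
  have hm_lt : #(Nsec b) < n := by
    simpa using card_lt_univ_of_notMem (mt mem_Nsec.mp (hi₀.trans_ne hsec.ne))
  have hmL : (#(Nsec b) : ℝ) + 1 ≤ L := by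
    have : (#(Nsec b) : ℝ) + 1 ≤ n := by exact_mod_cast hm_lt
    linarith
  have hupper := heq.cost_le_xmin_div (by linarith) hpos.le hi₀j hi₀
  have hlower := mul_xsec_le_cost_of_close (L := L) t (by linarith) hsec hclose hbj
  have := div_lt_one_sub_inv_div_mul (by exact_mod_cast hm_pos) hmL hpos hsec
  linarith

end Equilibrium

theorem claim_sec_bid_general
    {n : ℕ} (hn : 2 ≤ n) (L c : ℝ)
    (hL : 2 * ((n : ℝ) - 1) < L)
    (t b : Fin n → ℝ)
    (hb : ∀ i, 0 ≤ b i)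
    (heq : IsEquilibrium L c t b) :
    c * xmin b ≤ xsec b := by
  by_contra! hclose
  have hnL : (n : ℝ) < L := by
    have : (2 : ℝ) ≤ n := by exact_mod_cast hn
    linarith
  have : Nonempty (Fin n) := ⟨⟨0, by omega⟩⟩
  have hb₀ : 0 ≤ xmin b := le_ciInf hb
  have hpos : 0 < xmin b := by
    refine hb₀.lt_of_ne fun h => ?_
    rw [← h, mul_zero] at hclose
    linarith [xmin_le_xsec (x := b)]
  rcases (xmin_le_xsec (x := b)).eq_or_lt with hsec | hsec
  · exact (heq.xmin_nonpos_of_xsec_eq hn hnL hb₀ hsec.symm).not_gt hpos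
  · exact (heq.mul_xmin_le_xsec_of_lt hnL hpos hsec).not_gt hclose

/-- At any pure Nash equilibrium `b` of `A_{L,c}` on `n ≥ 2` machines, the second
smallest declaration exceeds the minimum declaration by at least a factor of `c`:
`xsec b ≥ c * xmin b`. -/
theorem claim_sec_bid
    {n : ℕ} (hn : 2 ≤ n) (L c : ℝ)
    (hL : 2 * ((n : ℝ) - 1) < L) (hc : 1 < c)
    (t b : Fin n → ℝ)
    (ht : ∀ i, 0 ≤ t i) (hb : ∀ i, 0 ≤ b i)
    (heq : IsEquilibrium L c t b) :
    c * xmin b ≤ xsec b :=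
  claim_sec_bid_general hn L c hL t b hb heq
end

section
/- Let t and t̂ be n×m matrices of nonnegative execution times (true and declared, respectively). Suppose α̂ is a fractional allocation that is fully balanced and optimal for t̂, i.e. Σ_j α̂_{kj}·t̂_{kj} = μ(t̂) for every machine k. Fix a machine i, and let t' be the matrix obtained from t̂ by replacing its i-th row with the i-th row of t. Then Σ_j α̂_{ij}·max(t̂_{ij}, t_{ij}) ≥ μ(t'); consequently, for every fractional allocation α' attaining μ(t'), Σ_j α̂_{ij}·max(t̂_{ij}, t_{ij}) ≥ Σ_j α'_{ij}·t_{ij}. In other words, under the LP mechanism (which allocates according to a fully balanced optimal fractional solution of the declared costs), truthfully reporting the execution times is a weakly dominant strategy for every machine bound by her declarations. -/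
open Finset

/-- `α` is a fractional allocation of `m` tasks to `n` machines: all fractions lie
in `[0,1]` and each task is allocated entirely. -/
def IsFracAlloc {n m : ℕ} (α : Fin n → Fin m → ℝ) : Prop :=
  (∀ i j, 0 ≤ α i j ∧ α i j ≤ 1) ∧ ∀ j, ∑ i, α i j = 1

/-- The load of machine `i` under allocation `α` and execution times `t`. -/
noncomputable def load {n m : ℕ} (α t : Fin n → Fin m → ℝ) (i : Fin n) : ℝ :=
  ∑ j, α i j * t i j

/-- The fractional makespan of the allocation `α` for execution times `t`:
the maximum load over machines. -/
noncomputable def fracMakespan {n m : ℕ} (α t : Fin n → Fin m → ℝ) : ℝ :=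
  ⨆ i : Fin n, load α t i

/-- `μ t`: the minimum fractional makespan over all fractional allocations (the
value of the LP relaxation of the scheduling problem). -/
noncomputable def mu {n m : ℕ} (t : Fin n → Fin m → ℝ) : ℝ :=
  ⨅ α : {α : Fin n → Fin m → ℝ // IsFracAlloc α}, fracMakespan α.1 t

lemma load_le_fracMakespan {n m : ℕ} (α t : Fin n → Fin m → ℝ) (i : Fin n) :
    load α t i ≤ fracMakespan α t :=
  le_ciSup (Set.finite_range _).bddAbove i

lemma mu_le_fracMakespan {n m : ℕ} (t : Fin n → Fin m → ℝ)
    (ht : ∀ i j, 0 ≤ t i j) (α : Fin n → Fin m → ℝ) (hα : IsFracAlloc α) :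
    mu t ≤ fracMakespan α t := by
  have hb : BddBelow (Set.range fun β : {β : Fin n → Fin m → ℝ // IsFracAlloc β} =>
      fracMakespan β.1 t) := by
    refine ⟨0, ?_⟩
    rintro x ⟨β, rfl⟩
    apply Real.iSup_nonneg
    intro k
    exact Finset.sum_nonneg fun j _ => mul_nonneg (β.2.1 k j).1 (ht k j)
  exact ciInf_le hb (⟨α, hα⟩ : {β : Fin n → Fin m → ℝ // IsFracAlloc β})

/-- Truthfulness of the LP mechanism. Let `t`, `th` be the true and declared
nonnegative execution times, and let `αh` be a fully balanced optimal fractional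
allocation for the declarations `th` (every machine's load equals `μ th`). Fix a
machine `i` and let `t'` be `th` with row `i` replaced by machine `i`'s true row.
Then machine `i`'s bound-by-declaration cost under `αh` is at least `μ t'`, and
hence at least her cost `∑ j, α' i j * t i j` under any fractional allocation `α'`
attaining `μ t'`: truth-telling is a weakly dominant strategy for every machine
under the LP mechanism. -/
theorem lp_mechanism_truthful
    {n m : ℕ} (t th : Fin n → Fin m → ℝ)
    (ht : ∀ i j, 0 ≤ t i j) (hth : ∀ i j, 0 ≤ th i j)
    (αh : Fin n → Fin m → ℝ) (hαh : IsFracAlloc αh)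
    (hbal : ∀ k, load αh th k = mu th)
    (i : Fin n) (t' : Fin n → Fin m → ℝ)
    (ht' : t' = Function.update th i (t i)) :
    mu t' ≤ ∑ j, αh i j * max (th i j) (t i j) ∧
    ∀ α' : Fin n → Fin m → ℝ, IsFracAlloc α' → fracMakespan α' t' = mu t' →
      ∑ j, α' i j * t i j ≤ ∑ j, αh i j * max (th i j) (t i j) := by

  have ht'n : ∀ k j, 0 ≤ t' k j := by
    intro k j
    rcases eq_or_ne k i with rfl | hk
    · simp [ht', Function.update_self]; exact ht k j
    · simp [ht', Function.update_of_ne hk]; exact hth k j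
  set B := ∑ j, αh i j * max (th i j) (t i j) with hB
  have h2 : ∑ j, αh i j * t i j ≤ B := by
    apply Finset.sum_le_sum
    intro j _
    exact mul_le_mul_of_nonneg_left (le_max_right _ _) (hαh.1 i j).1
  have h1 : mu th ≤ B := by
    rw [← hbal i]
    apply Finset.sum_le_sum
    intro j _
    exact mul_le_mul_of_nonneg_left (le_max_left _ _) (hαh.1 i j).1
  have hti : t' i = t i := by rw [ht']; exact Function.update_self _ _ _
  have : Nonempty (Fin n) := ⟨i⟩
  have hsup : fracMakespan αh t' ≤ B := by
    apply ciSup_le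
    intro k
    rcases eq_or_ne k i with rfl | hk
    · calc load αh t' k = ∑ j, αh k j * t k j := by unfold load; rw [hti]
        _ ≤ B := h2
    · calc load αh t' k = load αh th k := by
            unfold load; rw [ht']; rw [Function.update_of_ne hk]
        _ = mu th := hbal k
        _ ≤ B := h1
  have hfirst : mu t' ≤ B := le_trans (mu_le_fracMakespan t' ht'n αh hαh) hsup
  refine ⟨hfirst, ?_⟩
  intro α' hα' hopt
  calc ∑ j, α' i j * t i j = load α' t' i := by unfold load; rw [hti]
    _ ≤ fracMakespan α' t' := load_le_fracMakespan α' t' i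
    _ = mu t' := hopt
    _ ≤ B := hfirst
end

section
/- Let t be an n×m matrix of nonnegative execution times and let α be a fractional allocation attaining μ(t). Assign each task j independently at random to a machine, with task j going to machine i with probability α_{ij}. Then the expected makespan E[max_i Σ_{j assigned to i} t_{ij}] is at most n·μ(t), which in turn is at most n·OPT(t), where OPT(t) is the minimum over assignments σ from tasks to machines of max_i Σ_{j:σ(j)=i} t_{ij}. In other words, the LP randomized mechanism has approximation ratio at most n for integrally scheduling any number of tasks to n machines. -/
open Finset

open scoped Classical

lemma sum_prod_pi {n m : ℕ} (f : Fin m → Fin n → ℝ) :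
    ∑ σ : Fin m → Fin n, ∏ k, f k (σ k) = ∏ k, ∑ x, f k x := by
  rw [Finset.prod_univ_sum]
  rw [Fintype.piFinset_univ]

lemma sum_indicator_prod {n m : ℕ} (α : Fin n → Fin m → ℝ) (hα : IsFracAlloc α)
    (i : Fin n) (j : Fin m) :
    ∑ σ : Fin m → Fin n, (if σ j = i then ∏ k, α (σ k) k else 0) = α i j := by
  have h1 : ∀ σ : Fin m → Fin n,
      (if σ j = i then ∏ k, α (σ k) k else 0)
        = ∏ k, (if k = j then (if σ k = i then α (σ k) k else 0) else α (σ k) k) := by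
    intro σ
    by_cases h : σ j = i
    · simp only [h, if_true]
      refine Finset.prod_congr rfl fun k _ => ?_
      by_cases hk : k = j <;> simp [hk, h]
    · rw [if_neg h]
      symm
      apply Finset.prod_eq_zero (Finset.mem_univ j)
      simp [h]
  simp_rw [h1]
  have hsp := sum_prod_pi (fun k x => if k = j then (if x = i then α x k else 0) else α x k)
  rw [hsp]
  rw [Finset.prod_eq_single j]
  · simp
  · intro k _ hk
    simp [hk, hα.2 k]
  · simp

lemma expectation_load {n m : ℕ} (t α : Fin n → Fin m → ℝ) (hα : IsFracAlloc α) (i : Fin n) :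
    ∑ σ : Fin m → Fin n,
        (∏ j, α (σ j) j) * ∑ j ∈ Finset.univ.filter (fun j => σ j = i), t i j
      = load α t i := by
  unfold load
  simp_rw [Finset.sum_filter, Finset.mul_sum]
  rw [Finset.sum_comm]
  refine Finset.sum_congr rfl fun j _ => ?_
  have h2 : ∀ σ : Fin m → Fin n,
      (∏ k, α (σ k) k) * (if σ j = i then t i j else 0)
        = (if σ j = i then ∏ k, α (σ k) k else 0) * t i j := by
    intro σ; split_ifs <;> ring
  simp_rw [h2]
  rw [← Finset.sum_mul, sum_indicator_prod α hα i j]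

lemma iSup_le_sum' {n : ℕ} (g : Fin n → ℝ) (hg : ∀ i, 0 ≤ g i) :
    (⨆ i, g i) ≤ ∑ i, g i := by
  rcases Nat.eq_zero_or_pos n with h | h
  · subst h
    rw [iSup, Set.range_eq_empty, Real.sSup_empty]
    simp
  · have : Nonempty (Fin n) := Fin.pos_iff_nonempty.mp h
    exact ciSup_le fun i => Finset.single_le_sum (fun k _ => hg k) (Finset.mem_univ i)

open scoped Classical in
/-- The LP randomized mechanism has approximation ratio at most `n` for integrally
scheduling `m` tasks on `n` machines: if `α` is an optimal fractional allocation for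
the nonnegative times `t` and each task `j` is independently assigned to machine `i`
with probability `α i j`, then the expected makespan is at most `n * μ t`, which is
at most `n` times the optimal integral makespan
`⨅ σ, ⨆ i, ∑_{j : σ j = i} t i j`. -/
theorem lp_randomized_approximation
    {n m : ℕ} (t : Fin n → Fin m → ℝ) (ht : ∀ i j, 0 ≤ t i j)
    (α : Fin n → Fin m → ℝ) (hα : IsFracAlloc α)
    (hopt : fracMakespan α t = mu t) :
    (∑ σ : Fin m → Fin n,
        (∏ j, α (σ j) j) *
          ⨆ i : Fin n, ∑ j ∈ Finset.univ.filter (fun j => σ j = i), t i j) ≤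
      (n : ℝ) * mu t ∧
    (n : ℝ) * mu t ≤
      (n : ℝ) * ⨅ σ : Fin m → Fin n,
        ⨆ i : Fin n, ∑ j ∈ Finset.univ.filter (fun j => σ j = i), t i j := by
  constructor
  · -- expected makespan ≤ n * μ
    have step1 : (∑ σ : Fin m → Fin n,
        (∏ j, α (σ j) j) *
          ⨆ i : Fin n, ∑ j ∈ Finset.univ.filter (fun j => σ j = i), t i j)
        ≤ ∑ σ : Fin m → Fin n, (∏ j, α (σ j) j) *
          ∑ i : Fin n, ∑ j ∈ Finset.univ.filter (fun j => σ j = i), t i j := by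
      refine Finset.sum_le_sum fun σ _ => ?_
      refine mul_le_mul_of_nonneg_left ?_ (Finset.prod_nonneg fun j _ => (hα.1 (σ j) j).1)
      exact iSup_le_sum' _ fun i => Finset.sum_nonneg fun j _ => ht i j
    have step2 : (∑ σ : Fin m → Fin n, (∏ j, α (σ j) j) *
          ∑ i : Fin n, ∑ j ∈ Finset.univ.filter (fun j => σ j = i), t i j)
        = ∑ i : Fin n, load α t i := by
      calc (∑ σ : Fin m → Fin n, (∏ j, α (σ j) j) *
              ∑ i : Fin n, ∑ j ∈ Finset.univ.filter (fun j => σ j = i), t i j)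
          = ∑ σ : Fin m → Fin n, ∑ i : Fin n,
              (∏ j, α (σ j) j) * ∑ j ∈ Finset.univ.filter (fun j => σ j = i), t i j :=
            Finset.sum_congr rfl fun σ _ => Finset.mul_sum _ _ _
        _ = ∑ i : Fin n, ∑ σ : Fin m → Fin n,
              (∏ j, α (σ j) j) * ∑ j ∈ Finset.univ.filter (fun j => σ j = i), t i j :=
            Finset.sum_comm
        _ = ∑ i : Fin n, load α t i :=
            Finset.sum_congr rfl fun i _ => expectation_load t α hα i
    have step3 : (∑ i : Fin n, load α t i) ≤ (n : ℝ) * mu t := by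
      rw [← hopt]
      calc ∑ i : Fin n, load α t i ≤ ∑ _i : Fin n, fracMakespan α t :=
            Finset.sum_le_sum fun i _ =>
              le_ciSup (Set.Finite.bddAbove (Set.finite_range _)) i
        _ = (n : ℝ) * fracMakespan α t := by simp [mul_comm]
    linarith [step1, step2.le, step2.ge, step3]
  · -- n * μ ≤ n * OPT
    rcases Nat.eq_zero_or_pos n with h | h
    · subst h; simp
    have hne : Nonempty (Fin n) := Fin.pos_iff_nonempty.mp h
    refine mul_le_mul_of_nonneg_left ?_ (Nat.cast_nonneg n)
    have : Nonempty (Fin m → Fin n) := ⟨fun _ => Classical.arbitrary _⟩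
    refine le_ciInf fun σ => ?_
    set β : Fin n → Fin m → ℝ := fun i j => if σ j = i then 1 else 0 with hβdef
    have hβ : IsFracAlloc β := by
      constructor
      · intro i j; by_cases hij : σ j = i <;> simp [hβdef, hij]
      · intro j; simp [hβdef]
    have hload : ∀ i, load β t i = ∑ j ∈ Finset.univ.filter (fun j => σ j = i), t i j := by
      intro i
      rw [Finset.sum_filter]
      unfold load
      refine Finset.sum_congr rfl fun j _ => ?_
      by_cases hij : σ j = i <;> simp [hβdef, hij]
    have hbdd : BddBelow (Set.range fun a : {α : Fin n → Fin m → ℝ // IsFracAlloc α} =>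
        fracMakespan a.1 t) := by
      refine ⟨0, ?_⟩
      rintro x ⟨γ, rfl⟩
      obtain ⟨i0⟩ := hne
      calc (0:ℝ) ≤ load γ.1 t i0 :=
            Finset.sum_nonneg fun j _ => mul_nonneg (γ.2.1 i0 j).1 (ht i0 j)
        _ ≤ fracMakespan γ.1 t := le_ciSup (Set.Finite.bddAbove (Set.finite_range _)) i0
    have := ciInf_le hbdd ⟨β, hβ⟩
    refine this.trans ?_
    unfold fracMakespan
    exact le_of_eq (iSup_congr hload)
end

section
/- Fix an integer m ≥ 1 and a real M > 1. Consider m machines and m tasks with execution times t_{ij} = 1/M if i = j and t_{ij} = 1 if i ≠ j. Applying the proportional mechanism independently to each task yields fractions α_{ij} = M/(M+m−1) if i = j and α_{ij} = 1/(M+m−1) if i ≠ j, under which every machine's load Σ_j α_{ij}·t_{ij} equals m/(M+m−1); in contrast, the fractional allocation assigning task j wholly to machine j has makespan 1/M. Hence the fractional makespan of the task-independent proportional mechanism on this instance is at least M·m/(M+m−1) times the optimal fractional makespan, and this ratio tends to m as M → ∞; so the approximation ratio of the proportional mechanism for m tasks is at least m. -/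
open Finset

/-- Lower bound of `m` for the proportional mechanism on `m` tasks. On the instance
with `m` machines and `m` tasks where `t i j = 1/M` if `i = j` and `1` otherwise
(`M > 1`), the task-independent proportional mechanism produces the fractions
`α i j = M/(M+m-1)` if `i = j` and `1/(M+m-1)` otherwise, every machine's load is
`m/(M+m-1)`, while assigning each task `j` wholly to machine `j` has makespan `1/M`.
Hence the proportional makespan is at least `M*m/(M+m-1)` times the optimal
fractional makespan `μ t`, and this ratio tends to `m` as `M → ∞`; so the
approximation ratio of the proportional mechanism for `m` tasks is at least `m`. -/
theorem proportional_many_tasks_lower_bound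
    (m : ℕ) (hm : 1 ≤ m) (M : ℝ) (hM : 1 < M)
    (t : Fin m → Fin m → ℝ)
    (ht : ∀ i j, t i j = if i = j then 1 / M else 1)
    (α : Fin m → Fin m → ℝ)
    (hα : ∀ i j, α i j = (t i j)⁻¹ / ∑ k, (t k j)⁻¹) :
    (∀ i j, α i j = if i = j then M / (M + m - 1) else 1 / (M + m - 1)) ∧
    (∀ i, load α t i = (m : ℝ) / (M + m - 1)) ∧
    fracMakespan (fun i j => if i = j then (1 : ℝ) else 0) t = 1 / M ∧
    (M * m / (M + m - 1)) * mu t ≤ fracMakespan α t ∧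
    Filter.Tendsto (fun M' : ℝ => M' * m / (M' + m - 1))
      Filter.atTop (nhds (m : ℝ)) := by
  have hM0 : (0:ℝ) < M := lt_trans one_pos hM
  have hm1 : (1:ℝ) ≤ (m:ℝ) := by exact_mod_cast hm
  have hden : (0:ℝ) < M + m - 1 := by linarith
  have hsum : ∀ j : Fin m, ∑ k, (t k j)⁻¹ = M + m - 1 := by
    intro j
    have : ∀ k : Fin m, (t k j)⁻¹ = (if k = j then M - 1 else 0) + 1 := by
      intro k; rw [ht]; by_cases h : k = j <;> simp [h]
    simp only [this, Finset.sum_add_distrib, Finset.sum_ite_eq' Finset.univ j,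
      Finset.mem_univ, if_true, Finset.sum_const, Finset.card_univ, Fintype.card_fin,
      nsmul_eq_mul, mul_one]
    ring
  have hαval : ∀ i j, α i j = if i = j then M / (M + m - 1) else 1 / (M + m - 1) := by
    intro i j
    rw [hα, hsum]
    by_cases h : i = j <;> simp [ht, h, one_div, inv_inv]
  have hload : ∀ i, load α t i = (m : ℝ) / (M + m - 1) := by
    intro i
    have : ∀ j : Fin m, α i j * t i j = 1 / (M + m - 1) := by
      intro j
      rw [hαval, ht]
      by_cases h : i = j <;> simp [h]
      field_simp
    simp [load, this, Finset.sum_const, Fintype.card_fin, nsmul_eq_mul]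
    ring
  have hne : Nonempty (Fin m) := ⟨⟨0, hm⟩⟩
  have hmspanα : fracMakespan α t = (m : ℝ) / (M + m - 1) := by
    unfold fracMakespan
    simp [hload]
  have hmspanid : fracMakespan (fun i j => if i = j then (1 : ℝ) else 0) t = 1 / M := by
    unfold fracMakespan
    have : ∀ i : Fin m, load (fun i j => if i = j then (1 : ℝ) else 0) t i = 1 / M := by
      intro i
      unfold load
      have : ∀ j : Fin m, (if i = j then (1:ℝ) else 0) * t i j =
          if j = i then 1 / M else 0 := by
        intro j
        by_cases h : i = j <;> simp [h, ht, eq_comm]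
      simp [this]
    simp [this]
  refine ⟨hαval, hload, hmspanid, ?_, ?_⟩
  · -- main inequality
    have hidalloc : IsFracAlloc (fun i j : Fin m => if i = j then (1 : ℝ) else 0) := by
      constructor
      · intro i j; by_cases h : i = j <;> simp [h]
      · intro j; simp [Finset.sum_ite_eq' Finset.univ j]
    have hmu_le : mu t ≤ 1 / M := by
      rw [← hmspanid]
      apply ciInf_le _ (⟨_, hidalloc⟩ : {α : Fin m → Fin m → ℝ // IsFracAlloc α})
      refine ⟨0, ?_⟩
      rintro x ⟨⟨β, hβ⟩, rfl⟩
      have hload0 : (0:ℝ) ≤ load β t (Classical.choice hne) := by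
        apply Finset.sum_nonneg
        intro j _
        apply mul_nonneg (hβ.1 _ _).1
        rw [ht]; by_cases h : Classical.choice hne = j <;> simp [h] <;> positivity
      calc (0:ℝ) ≤ load β t (Classical.choice hne) := hload0
        _ ≤ fracMakespan β t := le_ciSup (Set.Finite.bddAbove (Set.finite_range _)) _
    rw [hmspanα]
    calc M * m / (M + m - 1) * mu t ≤ M * m / (M + m - 1) * (1 / M) := by
          apply mul_le_mul_of_nonneg_left hmu_le
          positivity
      _ = (m : ℝ) / (M + m - 1) := by field_simp
  · -- tendsto
    have h1 : Filter.Tendsto (fun M' : ℝ => M' + (m:ℝ) - 1) Filter.atTop Filter.atTop := by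
      apply Filter.tendsto_atTop_add_const_right
      apply Filter.tendsto_atTop_add_const_right
      exact Filter.tendsto_id
    have h2 : Filter.Tendsto (fun M' : ℝ => ((m:ℝ) - 1) / (M' + m - 1))
        Filter.atTop (nhds 0) := Filter.Tendsto.div_atTop tendsto_const_nhds h1
    have h3 : Filter.Tendsto (fun M' : ℝ => (m:ℝ) * (1 - ((m:ℝ) - 1) / (M' + m - 1)))
        Filter.atTop (nhds ((m:ℝ) * (1 - 0))) :=
      (Filter.Tendsto.const_sub _ h2).const_mul _
    rw [sub_zero, mul_one] at h3
    apply h3.congr'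
    filter_upwards [Filter.eventually_ge_atTop (1:ℝ)] with M' hM'
    have : M' + (m:ℝ) - 1 > 0 := by linarith
    field_simp
    ring
end
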